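/- arXiv:2510.20760 — 2 statements merged into one kernel-verified Lean document; each statement's English description precedes it below -/
import Mathlib

section
/- Let $A$ be a commutative ring containing $\mathbb{Q}$, let $\partial$ be a derivation of $A$, and let $I$ be an ideal of $A$ with $\partial(I) \subseteq I$. Then the radical $\sqrt{I}$ also satisfies $\partial(\sqrt{I}) \subseteq \sqrt{I}$. -/
lemma cancel_nat_aux {A : Type*} [CommRing A] [Algebra ℚ A] (I : Ideal A)
    (n : ℕ) (hn : n ≠ 0) (y : A) (h : (n : A) * y ∈ I) : y ∈ I := by
  have h1 : (algebraMap ℚ A (1 / n)) * ((n : A) * y) = y := by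
    rw [← mul_assoc, ← map_natCast (algebraMap ℚ A) n, ← map_mul]
    rw [one_div, inv_mul_cancel₀ (by exact_mod_cast hn), map_one, one_mul]
  rw [← h1]
  exact I.mul_mem_left _ h

/-- Seidenberg: over a ring containing `ℚ`, if an ideal is invariant
under a derivation then so is its radical. -/
theorem stmt_2 (A : Type*) [CommRing A] [Algebra ℚ A] (D : Derivation ℤ A A)
    (I : Ideal A) (hI : ∀ x ∈ I, D x ∈ I) :
    ∀ x ∈ I.radical, D x ∈ I.radical := by
  intro x hx
  obtain ⟨n, hn⟩ := hx
  set u := D x with hu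
  -- key claim: for all m ≤ n, u^(2m) * x^(n-m) ∈ I
  have key : ∀ m, m ≤ n → u ^ (2 * m) * x ^ (n - m) ∈ I := by
    intro m
    induction m with
    | zero => intro _; simpa using hn
    | succ m ih =>
      intro hm
      have hmn : m ≤ n := le_of_lt (Nat.lt_of_succ_le hm)
      have h := ih hmn
      set k := n - (m + 1) with hk
      have hnm : n - m = k + 1 := by omega
      rw [hnm] at h
      -- differentiate and multiply by u
      have h1 : D (u ^ (2 * m) * x ^ (k + 1)) ∈ I := hI _ h
      have h2 : u * D (u ^ (2 * m) * x ^ (k + 1)) ∈ I := I.mul_mem_left _ h1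
      -- the term with D(u^(2m)) is in I
      have h3 : x ^ (k + 1) * (u * D (u ^ (2 * m))) ∈ I := by
        rcases Nat.eq_zero_or_pos m with h0 | hpos
        · simp [h0]
        · have : u * D (u ^ (2 * m)) = (2 * m : ℕ) * (u ^ (2 * m) * D u) := by
            rw [Derivation.leibniz_pow]
            simp only [smul_eq_mul, nsmul_eq_mul]
            have h5 : u * u ^ (2 * m - 1) = u ^ (2 * m) := by
              rw [← pow_succ']
              congr 1
              omega
            calc u * (↑(2 * m) * (u ^ (2 * m - 1) * D u))
                = ↑(2 * m) * ((u * u ^ (2 * m - 1)) * D u) := by ring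
              _ = ↑(2 * m) * (u ^ (2 * m) * D u) := by rw [h5]
          rw [this]
          have : x ^ (k + 1) * ((2 * m : ℕ) * (u ^ (2 * m) * D u)) =
              ((2 * m : ℕ) * D u) * (u ^ (2 * m) * x ^ (k + 1)) := by ring
          rw [this]
          exact I.mul_mem_left _ h
      -- Leibniz expansion
      have hexp : u * D (u ^ (2 * m) * x ^ (k + 1)) =
          ((k + 1 : ℕ) : A) * (u ^ (2 * (m + 1)) * x ^ k) +
            x ^ (k + 1) * (u * D (u ^ (2 * m))) := by
        rw [Derivation.leibniz, D.leibniz_pow]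
        simp only [smul_eq_mul, nsmul_eq_mul, Nat.add_sub_cancel]
        push_cast
        ring
      have h4 : ((k + 1 : ℕ) : A) * (u ^ (2 * (m + 1)) * x ^ k) ∈ I := by
        have := I.sub_mem h2 h3
        rw [hexp] at this
        simpa using this
      exact cancel_nat_aux I (k + 1) (by omega) _ h4
  have := key n le_rfl
  simp only [Nat.sub_self, pow_zero, mul_one] at this
  exact ⟨2 * n, this⟩
end

section
/- Let $R$ be a commutative ring, $M$ a finitely generated $R$-module, and $\partial$ a derivation of $R$. Suppose $M$ carries an additive map $\nabla_\partial : M \to M$ satisfying the Leibniz rule $\nabla_\partial(a m) = \partial(a) m + a \nabla_\partial(m)$ for all $a \in R$, $m \in M$. Then every Fitting ideal $\mathrm{Fitt}_r(M)$ of $M$ is invariant under $\partial$: $\partial(\mathrm{Fitt}_r(M)) \subseteq \mathrm{Fitt}_r(M)$. -/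
/-!
Fix a presentation `π : Rⁿ → M` and choose vectors `a l ∈ Rⁿ` with `π (a l) = ∇ (π eₗ)`. The Leibniz
rule shows that for every relation `v`, the vector `D v + ∑ₗ vₗ • a l` is again a relation. By
Jacobi's formula `D (det X) = tr (adj X * D X)`, the derivative of a minor `X` of a relation matrix
splits into two traces. Moving the adjugate to the other side, the first becomes a sum of
determinants of `X` with one row replaced by (the restriction of) a new relation; the second is a
sum of determinants of `X` with one column replaced by a linear combination of columns of the
relation matrix. Both are combinations of minors of relation matrices.
-/

/-- The `r`-th Fitting ideal of a module `M`: for a presentation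
`(Fin n → R) →ₗ M` (surjective), it is generated by the `(n - r) × (n - r)`
minors of matrices whose rows are relations (elements of the kernel). -/
def fittingIdeal (R : Type*) [CommRing R] (M : Type*) [AddCommGroup M] [Module R M]
    (r : ℕ) : Ideal R :=
  ⨆ (n : ℕ) (π : (Fin n → R) →ₗ[R] M) (_ : Function.Surjective π),
    Ideal.span { d : R | ∃ (m : ℕ) (_ : m + r = n) (v : Fin m → (Fin n → R))
      (g : Fin m → Fin n), (∀ i, π (v i) = 0) ∧
      d = Matrix.det (Matrix.of fun i j : Fin m => v i (g j)) }

open Finset Matrix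

namespace Matrix

variable {n R : Type*} [Fintype n] [DecidableEq n] [CommRing R]

theorem sum_det_updateRow_eq_trace (X Y : Matrix n n R) :
    ∑ k, (X.updateRow k (Y k)).det = trace (Y * X.adjugate) := by
  simp only [← cramer_transpose_apply, cramer_eq_adjugate_mulVec, ← adjugate_transpose, trace,
    diag_apply, mul_apply, mulVec, dotProduct, transpose_apply, mul_comm]

theorem sum_det_updateCol_eq_trace (X Y : Matrix n n R) :
    ∑ k, (X.updateCol k fun i => Y i k).det = trace (X.adjugate * Y) := by
  simp only [← cramer_apply, cramer_eq_adjugate_mulVec, trace, diag_apply, mul_apply, mulVec,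
    dotProduct]

end Matrix

namespace Derivation

variable {A R : Type*} [CommSemiring A] [CommRing R] [Algebra A R]

theorem map_prod {M : Type*} [AddCommMonoid M] [Module A M] [Module R M] (D : Derivation A R M)
    {ι : Type*} [DecidableEq ι] (s : Finset ι) (f : ι → R) :
    D (∏ i ∈ s, f i) = ∑ i ∈ s, (∏ j ∈ s.erase i, f j) • D (f i) := by
  induction s using Finset.induction_on with
  | empty => simp
  | @insert a s ha ih =>
    rw [prod_insert ha, leibniz, ih, sum_insert ha, erase_insert ha, smul_sum, add_comm]
    congr 1
    refine sum_congr rfl fun i hi => ?_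
    rw [erase_insert_of_ne (ne_of_mem_of_not_mem hi ha).symm,
      prod_insert fun h => ha (mem_of_mem_erase h), mul_smul]

variable (D : Derivation A R R)

theorem map_det_eq_sum_det_updateCol {n : Type*} [Fintype n] [DecidableEq n] (X : Matrix n n R) :
    D X.det = ∑ k, (X.updateCol k fun i => D (X i k)).det := by
  simp only [det_apply, map_sum, Units.smul_def, map_zsmul, map_prod, smul_sum]
  rw [sum_comm]
  refine sum_congr rfl fun k _ => sum_congr rfl fun σ _ => ?_
  rw [← prod_erase_mul _ _ (mem_univ k), updateCol_self, smul_eq_mul]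
  congr 2
  exact prod_congr rfl fun j hj => (updateCol_ne (ne_of_mem_erase hj)).symm

theorem map_det {n : Type*} [Fintype n] [DecidableEq n] (X : Matrix n n R) :
    D X.det = trace (X.adjugate * X.map D) := by
  rw [map_det_eq_sum_det_updateCol, ← sum_det_updateCol_eq_trace]
  rfl

theorem map_mem_span_of_forall_mem {S : Set R} (hS : ∀ s ∈ S, D s ∈ Ideal.span S) :
    ∀ x ∈ Ideal.span S, D x ∈ Ideal.span S := by
  intro x hx
  induction hx using Submodule.span_induction with
  | mem s hs => exact hS s hs
  | zero => simp
  | add y z _ _ hy hz => simpa only [map_add] using Ideal.add_mem _ hy hz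
  | smul c y hy hDy =>
    rw [smul_eq_mul, leibniz, smul_eq_mul, smul_eq_mul]
    exact Ideal.add_mem _ (Ideal.mul_mem_left _ _ hDy) (Ideal.mul_mem_right _ _ hy)

theorem map_mem_iSup_of_forall_mem {ι : Sort*} {I : ι → Ideal R}
    (hI : ∀ i, ∀ x ∈ I i, D x ∈ I i) : ∀ x ∈ ⨆ i, I i, D x ∈ ⨆ i, I i := by
  rw [Submodule.iSup_eq_span]
  refine D.map_mem_span_of_forall_mem fun s hs => ?_
  obtain ⟨i, hi⟩ := Set.mem_iUnion.mp hs
  exact Submodule.subset_span (Set.mem_iUnion.mpr ⟨i, hI i s hi⟩)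

end Derivation

section Presentation

variable {A R M : Type*} [CommSemiring A] [CommRing R] [Algebra A R] [AddCommGroup M] [Module R M]
  {n : ℕ}

def relationMinors (π : (Fin n → R) →ₗ[R] M) (m : ℕ) : Set R :=
  {d | ∃ (v : Fin m → Fin n → R) (g : Fin m → Fin n), (∀ i, π (v i) = 0) ∧
    d = det (of fun i j => v i (g j))}

theorem LinearMap.apply_eq_sum_smul_apply_single {ι : Type*} [Fintype ι] [DecidableEq ι]
    (π : (ι → R) →ₗ[R] M) (u : ι → R) : π u = ∑ k, u k • π (Pi.single k 1) := by
  conv_lhs => rw [← (Pi.basisFun R ι).sum_repr u]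
  simp only [map_sum, map_smul, Pi.basisFun_repr, Pi.basisFun_apply]

variable (D : Derivation A R R) (nabla : M →+ M)
  (hL : ∀ (a : R) (m : M), nabla (a • m) = D a • m + a • nabla m)
  {π : (Fin n → R) →ₗ[R] M}
include hL

theorem map_derivation_add_sum_smul_eq_zero {a : Fin n → Fin n → R}
    (ha : ∀ l, π (a l) = nabla (π (Pi.single l 1))) {v : Fin n → R} (hv : π v = 0) :
    π ((fun k => D (v k)) + ∑ l, v l • a l) = 0 :=
  calc π ((fun k => D (v k)) + ∑ l, v l • a l)
      = ∑ k, (D (v k) • π (Pi.single k 1) + v k • nabla (π (Pi.single k 1))) := by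
        rw [map_add, π.apply_eq_sum_smul_apply_single, map_sum, sum_add_distrib]
        simp only [map_smul, ha]
    _ = nabla (π v) := by
        rw [π.apply_eq_sum_smul_apply_single v, map_sum]
        simp only [hL]
    _ = 0 := by rw [hv, map_zero]

theorem map_mem_span_relationMinors (hπ : Function.Surjective π) {m : ℕ} :
    ∀ d ∈ relationMinors π m, D d ∈ Ideal.span (relationMinors π m) := by
  rintro _ ⟨v, g, hv, rfl⟩
  choose a ha using fun l => hπ (nabla (π (Pi.single l 1)))
  set W : Fin m → Fin n → R := fun i => (fun k => D (v i k)) + ∑ l, v i l • a l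
  have hW : ∀ i, π (W i) = 0 := fun i => map_derivation_add_sum_smul_eq_zero D nabla hL ha (hv i)
  set X : Matrix (Fin m) (Fin m) R := of fun i j => v i (g j)
  have hDX : X.map D = (of fun i j => W i (g j)) - of fun i j => ∑ l, v i l * a l (g j) := by
    ext i j
    simp [X, W]
  rw [D.map_det, hDX, mul_sub, trace_sub, trace_mul_comm, ← sum_det_updateRow_eq_trace,
    ← sum_det_updateCol_eq_trace]
  refine Ideal.sub_mem _ (Ideal.sum_mem _ fun k _ => Ideal.subset_span ?_)
    (Ideal.sum_mem _ fun k _ => ?_)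
  · refine ⟨Function.update v k (W k), g, fun i => ?_, ?_⟩
    · rcases eq_or_ne i k with rfl | h
      · simpa using hW i
      · simpa [h] using hv i
    · congr 1
      ext i j
      rcases eq_or_ne i k with rfl | h <;> simp [X, updateRow_apply, *]
  · have hcol : (fun i => ∑ l, v i l * a l (g k)) = ∑ l, a l (g k) • fun i => v i l := by
      ext i
      simp [mul_comm]
    simp only [of_apply]
    rw [← cramer_apply, hcol, map_sum, Finset.sum_apply]
    refine Ideal.sum_mem _ fun l _ => ?_
    rw [map_smul, Pi.smul_apply, smul_eq_mul, cramer_apply]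
    refine Ideal.mul_mem_left _ _ (Ideal.subset_span ⟨v, Function.update g k l, hv, ?_⟩)
    congr 1
    ext i j
    rcases eq_or_ne j k with rfl | h <;> simp [X, *]

end Presentation

theorem stmt_7_general (R : Type*) [CommRing R] (M : Type*) [AddCommGroup M] [Module R M]
    (D : Derivation ℤ R R) (nabla : M →+ M)
    (hL : ∀ (a : R) (m : M), nabla (a • m) = D a • m + a • nabla m) :
    ∀ r : ℕ, ∀ x ∈ fittingIdeal R M r, D x ∈ fittingIdeal R M r := by
  intro r
  refine D.map_mem_iSup_of_forall_mem fun n => D.map_mem_iSup_of_forall_mem fun π =>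
    D.map_mem_iSup_of_forall_mem fun hπ => D.map_mem_span_of_forall_mem ?_
  rintro _ ⟨m, hm, v, g, hv, rfl⟩
  refine Ideal.span_mono ?_ (map_mem_span_relationMinors D nabla hL hπ (m := m) _ ⟨v, g, hv, rfl⟩)
  exact fun _ ⟨v, g, hv, hd⟩ => ⟨m, hm, v, g, hv, hd⟩

/-- if a finitely generated module `M` over `R` carries an additive
operator satisfying the Leibniz rule along a derivation `∂` of `R`, then every
Fitting ideal of `M` is invariant under `∂`. -/
theorem stmt_7 (R : Type*) [CommRing R] (M : Type*) [AddCommGroup M] [Module R M]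
    [Module.Finite R M] (D : Derivation ℤ R R) (nabla : M →+ M)
    (hL : ∀ (a : R) (m : M), nabla (a • m) = D a • m + a • nabla m) :
    ∀ r : ℕ, ∀ x ∈ fittingIdeal R M r, D x ∈ fittingIdeal R M r :=
  stmt_7_general R M D nabla hL
end
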